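/- arXiv:2509.02327 — 5 statements merged into one kernel-verified Lean document; each statement's English description precedes it below -/
import Mathlib

section
/- Variational aleatoric entropy upper bound: under the conditional independence assumptions y* ⊥ U | (θ, x*, Z, D) and the latent-parameter model in which y* | x*, θ is independent of D and Z, the variational estimator V_a(y*|x*, Z, D) := E_{p(U|Z,D)}[H[p(y*|x*, U, Z, D)]] satisfies V_a(y*|x*, Z, D) ≥ E_{p(θ|D)}[H[p(y*|x*, θ)]], with the gap equal to E_{p(U|Z,D)}[I(y*; θ | x*, U, Z, D)]. -/
open scoped BigOperators

/-- Shannon entropy of a probability mass function on a finite type. -/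
noncomputable def entropy {α : Type*} [Fintype α] (q : α → ℝ) : ℝ :=
  -∑ a, q a * Real.log (q a)

/-- Variational aleatoric entropy upper bound: under the latent-parameter model
`θ ~ p(θ|D)`, `y* | θ ~ p(y*|x*,θ)`, `U | θ ~ p(U|Z,θ)` (so `y* ⊥ U | θ`), the
variational estimator `V_a = E_{p(U|Z,D)}[H[p(y*|x*,U,Z,D)]]` satisfies
`V_a ≥ E_{p(θ|D)}[H[p(y*|x*,θ)]]`, with the gap equal to
`E_{p(U|Z,D)}[I(y*; θ | x*, U, Z, D)]`. -/
theorem variational_aleatoric_entropy_upper_bound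
    {Θ Y U : Type*} [Fintype Θ] [Fintype Y] [Fintype U]
    (pθ : Θ → ℝ) (py : Θ → Y → ℝ) (pu : Θ → U → ℝ)
    (hpθ0 : ∀ θ, 0 < pθ θ) (hpθ1 : ∑ θ, pθ θ = 1)
    (hpy0 : ∀ θ y, 0 < py θ y) (hpy1 : ∀ θ, ∑ y, py θ y = 1)
    (hpu0 : ∀ θ u, 0 < pu θ u) (hpu1 : ∀ θ, ∑ u, pu θ u = 1)
    -- marginal of U given Z, D
    (pU : U → ℝ) (hpU : ∀ u, pU u = ∑ θ, pθ θ * pu θ u)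
    -- posterior over θ given U, Z, D
    (post : U → Θ → ℝ) (hpost : ∀ u θ, post u θ = pθ θ * pu θ u / pU u)
    -- posterior predictive given U, Z, D
    (pred : U → Y → ℝ) (hpred : ∀ u y, pred u y = ∑ θ, py θ y * post u θ) :
    (∑ θ, pθ θ * entropy (py θ)) ≤ (∑ u, pU u * entropy (pred u))
    ∧ (∑ u, pU u * entropy (pred u)) - (∑ θ, pθ θ * entropy (py θ))
        = ∑ u, pU u * (∑ θ, ∑ y, post u θ * py θ y * Real.log (py θ y / pred u y)) := by
  classical
  have hΘne : (Finset.univ : Finset Θ).Nonempty := by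
    rcases Finset.univ.eq_empty_or_nonempty (α := Θ) with h | h
    · rw [h, Finset.sum_empty] at hpθ1; norm_num at hpθ1
    · exact h
  have hpU0 : ∀ u, 0 < pU u := fun u => by
    rw [hpU u]
    exact Finset.sum_pos (fun θ _ => mul_pos (hpθ0 θ) (hpu0 θ u)) hΘne
  have hpost0 : ∀ u θ, 0 < post u θ := fun u θ => by
    rw [hpost u θ]
    exact div_pos (mul_pos (hpθ0 θ) (hpu0 θ u)) (hpU0 u)
  have hpost_sum : ∀ u, ∑ θ, post u θ = 1 := fun u => by
    have h : ∑ θ, post u θ = (∑ θ, pθ θ * pu θ u) / pU u := by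
      rw [Finset.sum_div]; exact Finset.sum_congr rfl fun θ _ => hpost u θ
    rw [h, ← hpU u, div_self (hpU0 u).ne']
  have hpred0 : ∀ u y, 0 < pred u y := fun u y => by
    rw [hpred u y]
    exact Finset.sum_pos (fun θ _ => mul_pos (hpy0 θ y) (hpost0 u θ)) hΘne
  have hpred_sum : ∀ u, ∑ y, pred u y = 1 := fun u => by
    calc ∑ y, pred u y = ∑ y, ∑ θ, py θ y * post u θ :=
          Finset.sum_congr rfl fun y _ => hpred u y
      _ = ∑ θ, ∑ y, py θ y * post u θ := Finset.sum_comm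
      _ = ∑ θ, post u θ := by
          refine Finset.sum_congr rfl fun θ _ => ?_
          rw [← Finset.sum_mul, hpy1 θ, one_mul]
      _ = 1 := hpost_sum u
  have hmix : ∀ θ, ∑ u, pU u * post u θ = pθ θ := fun θ => by
    calc ∑ u, pU u * post u θ = ∑ u, pθ θ * pu θ u := by
          refine Finset.sum_congr rfl fun u _ => ?_
          rw [hpost u θ, mul_comm, div_mul_cancel₀ _ (hpU0 u).ne']
      _ = pθ θ := by rw [← Finset.mul_sum, hpu1 θ, mul_one]
  -- inner sum identity
  have hinner : ∀ u, (∑ θ, ∑ y, post u θ * py θ y * Real.log (py θ y / pred u y))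
      = (∑ θ, post u θ * (∑ y, py θ y * Real.log (py θ y)))
        - ∑ y, pred u y * Real.log (pred u y) := fun u => by
    have h1 : ∀ θ y, post u θ * py θ y * Real.log (py θ y / pred u y)
        = post u θ * (py θ y * Real.log (py θ y))
          - post u θ * py θ y * Real.log (pred u y) := fun θ y => by
      rw [Real.log_div (hpy0 θ y).ne' (hpred0 u y).ne']
      ring
    calc (∑ θ, ∑ y, post u θ * py θ y * Real.log (py θ y / pred u y))
        = (∑ θ, ∑ y, (post u θ * (py θ y * Real.log (py θ y))
            - post u θ * py θ y * Real.log (pred u y))) := by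
          exact Finset.sum_congr rfl fun θ _ => Finset.sum_congr rfl fun y _ => h1 θ y
      _ = (∑ θ, ∑ y, post u θ * (py θ y * Real.log (py θ y)))
          - ∑ θ, ∑ y, post u θ * py θ y * Real.log (pred u y) := by
          rw [← Finset.sum_sub_distrib]
          exact Finset.sum_congr rfl fun θ _ => Finset.sum_sub_distrib _ _
      _ = (∑ θ, post u θ * (∑ y, py θ y * Real.log (py θ y)))
          - ∑ y, pred u y * Real.log (pred u y) := by
          congr 1
          · exact Finset.sum_congr rfl fun θ _ => (Finset.mul_sum _ _ _).symm
          · rw [Finset.sum_comm]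
            refine Finset.sum_congr rfl fun y _ => ?_
            rw [hpred u y, Finset.sum_mul]
            refine Finset.sum_congr rfl fun θ _ => ?_
            ring
  -- the main gap equality
  have hgap : (∑ u, pU u * (∑ θ, ∑ y, post u θ * py θ y * Real.log (py θ y / pred u y)))
      = (∑ u, pU u * entropy (pred u)) - (∑ θ, pθ θ * entropy (py θ)) := by
    calc (∑ u, pU u * (∑ θ, ∑ y, post u θ * py θ y * Real.log (py θ y / pred u y)))
        = ∑ u, (pU u * (∑ θ, post u θ * (∑ y, py θ y * Real.log (py θ y)))
            - pU u * (∑ y, pred u y * Real.log (pred u y))) := by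
          refine Finset.sum_congr rfl fun u _ => ?_
          rw [hinner u, mul_sub]
      _ = (∑ u, ∑ θ, pU u * post u θ * (∑ y, py θ y * Real.log (py θ y)))
          - ∑ u, pU u * (∑ y, pred u y * Real.log (pred u y)) := by
          rw [← Finset.sum_sub_distrib]
          refine Finset.sum_congr rfl fun u _ => ?_
          congr 1
          rw [Finset.mul_sum]
          exact Finset.sum_congr rfl fun θ _ => (mul_assoc _ _ _).symm
      _ = (∑ θ, pθ θ * (∑ y, py θ y * Real.log (py θ y)))
          - ∑ u, pU u * (∑ y, pred u y * Real.log (pred u y)) := by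
          congr 1
          rw [Finset.sum_comm]
          refine Finset.sum_congr rfl fun θ _ => ?_
          rw [← Finset.sum_mul, hmix θ]
      _ = (∑ u, pU u * entropy (pred u)) - (∑ θ, pθ θ * entropy (py θ)) := by
          simp only [entropy, mul_neg]
          rw [Finset.sum_neg_distrib, Finset.sum_neg_distrib]
          ring
  have hnn : ∀ u, 0 ≤ ∑ θ, ∑ y, post u θ * py θ y * Real.log (py θ y / pred u y) := fun u => by
    have h1 : ∀ θ y, post u θ * py θ y - post u θ * pred u y
        ≤ post u θ * py θ y * Real.log (py θ y / pred u y) := fun θ y => by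
      have hx : Real.log (pred u y / py θ y) ≤ pred u y / py θ y - 1 :=
        Real.log_le_sub_one_of_pos (div_pos (hpred0 u y) (hpy0 θ y))
      have hlog : 1 - pred u y / py θ y ≤ Real.log (py θ y / pred u y) := by
        have h2 : Real.log (py θ y / pred u y) = - Real.log (pred u y / py θ y) := by
          rw [← Real.log_inv, inv_div]
        rw [h2]; linarith
      have := mul_le_mul_of_nonneg_left hlog
        (le_of_lt (mul_pos (hpost0 u θ) (hpy0 θ y)))
      calc post u θ * py θ y - post u θ * pred u y
          = post u θ * py θ y * (1 - pred u y / py θ y) := by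
            have hy : py θ y ≠ 0 := (hpy0 θ y).ne'
            field_simp
        _ ≤ post u θ * py θ y * Real.log (py θ y / pred u y) := this
    calc (0:ℝ) = (∑ θ, ∑ y, (post u θ * py θ y - post u θ * pred u y)) := by
          rw [Finset.sum_congr rfl fun θ _ => Finset.sum_sub_distrib _ _,
            Finset.sum_sub_distrib]
          have e1 : ∑ θ, ∑ y, post u θ * py θ y = 1 := by
            rw [Finset.sum_congr rfl fun θ (_ : θ ∈ Finset.univ) =>
              (Finset.mul_sum _ _ _).symm]
            rw [Finset.sum_congr rfl fun θ (_ : θ ∈ Finset.univ) => by rw [hpy1 θ, mul_one]]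
            exact hpost_sum u
          have e2 : ∑ θ, ∑ y, post u θ * pred u y = 1 := by
            rw [Finset.sum_congr rfl fun θ (_ : θ ∈ Finset.univ) =>
              (Finset.mul_sum _ _ _).symm]
            rw [Finset.sum_congr rfl fun θ (_ : θ ∈ Finset.univ) => by
              rw [hpred_sum u, mul_one]]
            exact hpost_sum u
          rw [e1, e2, sub_self]
      _ ≤ _ := Finset.sum_le_sum fun θ _ =>
          Finset.sum_le_sum fun y _ => h1 θ y
  constructor
  · have h0 : 0 ≤ ∑ u, pU u * (∑ θ, ∑ y, post u θ * py θ y * Real.log (py θ y / pred u y)) :=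
      Finset.sum_nonneg fun u _ => mul_nonneg (hpU0 u).le (hnn u)
    linarith [hgap]
  · linarith [hgap]
end

section
/- Variational aleatoric variance upper bound: under the conditional independence y* ⊥ (Z, U, D) | (x*, θ), the estimator V_a^Σ(y*|x*, Z, D) := E_{p(U|Z,D)}[Var(y* | x*, U, Z, D)] satisfies V_a^Σ(y*|x*, Z, D) ≥ E_{p(θ|D)}[Var(y* | x*, θ)]. -/
open scoped BigOperators

/-- Mean of a real-valued random variable with pmf `q` and value map `val`. -/
noncomputable def pmfMean {α : Type*} [Fintype α] (q : α → ℝ) (val : α → ℝ) : ℝ :=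
  ∑ a, q a * val a

/-- Variance of a real-valued random variable with pmf `q` and value map `val`. -/
noncomputable def pmfVar {α : Type*} [Fintype α] (q : α → ℝ) (val : α → ℝ) : ℝ :=
  ∑ a, q a * (val a - pmfMean q val) ^ 2

/-!
Conditioning on `U` can only lose information about `θ`: given `U = u`, the predictive law of
`y*` is the mixture of the laws `p(y*|x*,θ)` under the posterior `p(θ|U=u)`. The variance of a
mixture dominates the average of the component variances, since the second moment of each
component about the mixture mean exceeds its own variance by a squared bias. Averaging over
`p(U)` and using `p(U) p(θ|U) = p(θ) p(U|θ)` turns the averaged component variances into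
`E_{p(θ)}[Var(y*|x*,θ)]`.
-/

open Finset

section pmf

variable {α : Type*} [Fintype α] {q : α → ℝ} (val : α → ℝ)

theorem sum_mul_sub_sq_eq_pmfVar_add (hq : ∑ a, q a = 1) (c : ℝ) :
    ∑ a, q a * (val a - c) ^ 2 = pmfVar q val + (pmfMean q val - c) ^ 2 := by
  have expand : ∀ d : ℝ, ∑ a, q a * (val a - d) ^ 2
      = ∑ a, q a * val a ^ 2 - 2 * d * pmfMean q val + d ^ 2 := by
    intro d
    simp only [pmfMean, sub_sq, mul_add, mul_sub, sum_add_distrib, sum_sub_distrib, mul_sum]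
    rw [← sum_mul, hq]
    congr 1
    · congr 1
      exact sum_congr rfl fun a _ => by ring
    · ring
  rw [expand c, pmfVar, expand]
  ring

theorem pmfVar_le_sum_mul_sub_sq (hq : ∑ a, q a = 1) (c : ℝ) :
    pmfVar q val ≤ ∑ a, q a * (val a - c) ^ 2 := by
  rw [sum_mul_sub_sq_eq_pmfVar_add val hq]
  exact le_add_of_nonneg_right (sq_nonneg _)

end pmf

theorem sum_mul_pmfVar_le_pmfVar_mixture {ι α : Type*} [Fintype ι] [Fintype α]
    (val : α → ℝ) {w : ι → ℝ} {q : ι → α → ℝ}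
    (hw : ∀ i, 0 ≤ w i) (hq : ∀ i, ∑ a, q i a = 1) :
    ∑ i, w i * pmfVar (q i) val ≤ pmfVar (fun a => ∑ i, q i a * w i) val := by
  set m := pmfMean (fun a => ∑ i, q i a * w i) val
  calc ∑ i, w i * pmfVar (q i) val
      ≤ ∑ i, w i * ∑ a, q i a * (val a - m) ^ 2 :=
        sum_le_sum fun i _ =>
          mul_le_mul_of_nonneg_left (pmfVar_le_sum_mul_sub_sq val (hq i) m) (hw i)
    _ = pmfVar (fun a => ∑ i, q i a * w i) val := by
        simp only [pmfVar, mul_sum, sum_mul]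
        rw [sum_comm]
        exact sum_congr rfl fun a _ => sum_congr rfl fun i _ => by ring

theorem sum_mul_div_sum_of_nonneg {ι : Type*} [Fintype ι] {w : ι → ℝ}
    (hw : ∀ i, 0 ≤ w i) (i : ι) : (∑ j, w j) * (w i / ∑ j, w j) = w i := by
  by_cases hW : ∑ j, w j = 0
  · rw [(sum_eq_zero_iff_of_nonneg fun j _ => hw j).1 hW i (mem_univ i), hW, zero_div, mul_zero]
  · exact mul_div_cancel₀ _ hW

theorem variational_aleatoric_variance_upper_bound_general
    {Θ Y U : Type*} [Fintype Θ] [Fintype Y] [Fintype U]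
    (val : Y → ℝ)
    (pθ : Θ → ℝ) (py : Θ → Y → ℝ) (pu : Θ → U → ℝ)
    (hpθ0 : ∀ θ, 0 ≤ pθ θ)
    (hpy1 : ∀ θ, ∑ y, py θ y = 1)
    (hpu0 : ∀ θ u, 0 < pu θ u) (hpu1 : ∀ θ, ∑ u, pu θ u = 1)
    (pU : U → ℝ) (hpU : ∀ u, pU u = ∑ θ, pθ θ * pu θ u)
    (post : U → Θ → ℝ) (hpost : ∀ u θ, post u θ = pθ θ * pu θ u / pU u)
    (pred : U → Y → ℝ) (hpred : ∀ u y, pred u y = ∑ θ, py θ y * post u θ) :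
    (∑ θ, pθ θ * pmfVar (py θ) val) ≤ ∑ u, pU u * pmfVar (pred u) val := by
  have hjoint0 : ∀ u θ, 0 ≤ pθ θ * pu θ u := fun u θ => mul_nonneg (hpθ0 θ) (hpu0 θ u).le
  have hpU0 : ∀ u, 0 ≤ pU u := fun u => (hpU u).symm ▸ sum_nonneg fun θ _ => hjoint0 u θ
  have hpost0 : ∀ u θ, 0 ≤ post u θ := fun u θ =>
    (hpost u θ).symm ▸ div_nonneg (hjoint0 u θ) (hpU0 u)
  have bayes : ∀ u θ, pU u * post u θ = pθ θ * pu θ u := fun u θ => by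
    rw [hpost, hpU]
    exact sum_mul_div_sum_of_nonneg (hjoint0 u) θ
  calc ∑ θ, pθ θ * pmfVar (py θ) val
      = ∑ u, pU u * ∑ θ, post u θ * pmfVar (py θ) val := by
        simp only [mul_sum, ← mul_assoc, bayes]
        rw [sum_comm]
        exact sum_congr rfl fun θ _ => by rw [← sum_mul, ← mul_sum, hpu1, mul_one]
    _ ≤ ∑ u, pU u * pmfVar (pred u) val := by
        refine sum_le_sum fun u _ => mul_le_mul_of_nonneg_left ?_ (hpU0 u)
        rw [show pred u = fun y => ∑ θ, py θ y * post u θ from funext (hpred u)]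
        exact sum_mul_pmfVar_le_pmfVar_mixture val (hpost0 u) hpy1

/-- Variational aleatoric variance upper bound: under the latent-parameter model
`θ ~ p(θ|D)`, `y* | θ ~ p(y*|x*,θ)` (independently of `Z`, `U` and `D` given `θ`),
`U | θ ~ p(U|Z,θ)`, the estimator
`V_a^Σ = E_{p(U|Z,D)}[Var(y*|x*,U,Z,D)]` satisfies
`V_a^Σ ≥ E_{p(θ|D)}[Var(y*|x*,θ)]`. -/
theorem variational_aleatoric_variance_upper_bound
    {Θ Y U : Type*} [Fintype Θ] [Fintype Y] [Fintype U]
    (val : Y → ℝ)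
    (pθ : Θ → ℝ) (py : Θ → Y → ℝ) (pu : Θ → U → ℝ)
    (hpθ0 : ∀ θ, 0 ≤ pθ θ) (hpθ1 : ∑ θ, pθ θ = 1)
    (hpy0 : ∀ θ y, 0 ≤ py θ y) (hpy1 : ∀ θ, ∑ y, py θ y = 1)
    (hpu0 : ∀ θ u, 0 < pu θ u) (hpu1 : ∀ θ, ∑ u, pu θ u = 1)
    (pU : U → ℝ) (hpU : ∀ u, pU u = ∑ θ, pθ θ * pu θ u)
    (post : U → Θ → ℝ) (hpost : ∀ u θ, post u θ = pθ θ * pu θ u / pU u)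
    (pred : U → Y → ℝ) (hpred : ∀ u y, pred u y = ∑ θ, py θ y * post u θ) :
    (∑ θ, pθ θ * pmfVar (py θ) val) ≤ ∑ u, pU u * pmfVar (pred u) val :=
  variational_aleatoric_variance_upper_bound_general val pθ py pu hpθ0 hpy1 hpu0 hpu1 pU hpU post
    hpost pred hpred
end

section
/- Data-processing bound for variational epistemic uncertainty: if y* ⊥ U | (θ, x*, Z, D) (so that U → θ → y* forms a Markov chain given x*, Z, D) and (y*, θ) ⊥ Z | (x*, D), then I(y*; U | x*, Z, D) ≤ I(y*; θ | x*, D). -/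
open scoped BigOperators

/-- Data-processing bound for variational epistemic uncertainty: under the Bayesian model
`θ ~ p(θ|D)`, `y* | θ ~ p(y*|x*,θ)`, `U | θ ~ p(U|Z,θ)` (so `U → θ → y*` is a Markov
chain given `x*, Z, D`, and `(y*, θ)` does not depend on `Z`), the mutual information
satisfies `I(y*; U | x*, Z, D) ≤ I(y*; θ | x*, D)`. -/
theorem data_processing_epistemic_bound
    {Θ Y U : Type*} [Fintype Θ] [Fintype Y] [Fintype U]
    (pθ : Θ → ℝ) (py : Θ → Y → ℝ) (pu : Θ → U → ℝ)
    (hpθ0 : ∀ θ, 0 < pθ θ) (hpθ1 : ∑ θ, pθ θ = 1)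
    (hpy0 : ∀ θ y, 0 < py θ y) (hpy1 : ∀ θ, ∑ y, py θ y = 1)
    (hpu0 : ∀ θ u, 0 < pu θ u) (hpu1 : ∀ θ, ∑ u, pu θ u = 1)
    -- marginals under the joint p(θ, y, u) = p(θ|D) p(y|x*,θ) p(U|Z,θ)
    (pY : Y → ℝ) (hpY : ∀ y, pY y = ∑ θ, pθ θ * py θ y)
    (pU : U → ℝ) (hpU : ∀ u, pU u = ∑ θ, pθ θ * pu θ u)
    (pYU : Y → U → ℝ) (hpYU : ∀ y u, pYU y u = ∑ θ, pθ θ * py θ y * pu θ u) :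
    (∑ y, ∑ u, pYU y u * Real.log (pYU y u / (pY y * pU u)))
      ≤ ∑ y, ∑ θ, pθ θ * py θ y * Real.log (py θ y / pY y) := by
  have hΘ : Nonempty Θ := by
    rcases isEmpty_or_nonempty Θ with h | h
    · rw [Finset.univ_eq_empty, Finset.sum_empty] at hpθ1; norm_num at hpθ1
    · exact h
  haveI := hΘ
  have hpY' : ∀ y, 0 < pY y := fun y => by
    rw [hpY]
    exact Finset.sum_pos (fun θ _ => mul_pos (hpθ0 θ) (hpy0 θ y)) Finset.univ_nonempty
  have hpU' : ∀ u, 0 < pU u := fun u => by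
    rw [hpU]
    exact Finset.sum_pos (fun θ _ => mul_pos (hpθ0 θ) (hpu0 θ u)) Finset.univ_nonempty
  have hpYU' : ∀ y u, 0 < pYU y u := fun y u => by
    rw [hpYU]
    exact Finset.sum_pos
      (fun θ _ => mul_pos (mul_pos (hpθ0 θ) (hpy0 θ y)) (hpu0 θ u)) Finset.univ_nonempty
  rw [← sub_nonneg]
  have hrw : (∑ y, ∑ θ, pθ θ * py θ y * Real.log (py θ y / pY y))
      - (∑ y, ∑ u, pYU y u * Real.log (pYU y u / (pY y * pU u)))
      = ∑ y, ∑ θ, ∑ u, pθ θ * py θ y * pu θ u *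
          Real.log (py θ y * pU u / pYU y u) := by
    rw [← Finset.sum_sub_distrib]
    refine Finset.sum_congr rfl fun y _ => ?_
    have hA : (∑ θ, pθ θ * py θ y * Real.log (py θ y / pY y))
        = ∑ θ, ∑ u, pθ θ * py θ y * pu θ u * Real.log (py θ y / pY y) := by
      refine Finset.sum_congr rfl fun θ _ => ?_
      have : ∑ u, pθ θ * py θ y * pu θ u * Real.log (py θ y / pY y)
          = (pθ θ * py θ y * Real.log (py θ y / pY y)) * ∑ u, pu θ u := by
        rw [Finset.mul_sum]; exact Finset.sum_congr rfl fun u _ => by ring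
      rw [this, hpu1, mul_one]
    have hB : (∑ u, pYU y u * Real.log (pYU y u / (pY y * pU u)))
        = ∑ θ, ∑ u, pθ θ * py θ y * pu θ u * Real.log (pYU y u / (pY y * pU u)) := by
      rw [Finset.sum_comm]
      refine Finset.sum_congr rfl fun u _ => ?_
      rw [hpYU, Finset.sum_mul]
    rw [hA, hB, ← Finset.sum_sub_distrib]
    refine Finset.sum_congr rfl fun θ _ => ?_
    rw [← Finset.sum_sub_distrib]
    refine Finset.sum_congr rfl fun u _ => ?_
    rw [← mul_sub]
    congr 1
    rw [Real.log_div (hpy0 θ y).ne' (hpY' y).ne',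
        Real.log_div (hpYU' y u).ne' (mul_pos (hpY' y) (hpU' u)).ne',
        Real.log_div (mul_pos (hpy0 θ y) (hpU' u)).ne' (hpYU' y u).ne',
        Real.log_mul (hpY' y).ne' (hpU' u).ne',
        Real.log_mul (hpy0 θ y).ne' (hpU' u).ne']
    ring
  rw [hrw]
  have S1 : ∑ y, ∑ θ, ∑ u, pθ θ * py θ y * pu θ u = 1 := by
    have h1 : ∀ y θ, ∑ u, pθ θ * py θ y * pu θ u = pθ θ * py θ y := fun y θ => by
      rw [← Finset.mul_sum, hpu1, mul_one]
    simp_rw [h1]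
    rw [Finset.sum_comm]
    have h2 : ∀ θ, ∑ y, pθ θ * py θ y = pθ θ := fun θ => by
      rw [← Finset.mul_sum, hpy1, mul_one]
    simp_rw [h2]; exact hpθ1
  have S2 : ∑ y, ∑ θ, ∑ u, pθ θ * py θ y * pu θ u * (pYU y u / (py θ y * pU u)) = 1 := by
    have hterm : ∀ y θ u, pθ θ * py θ y * pu θ u * (pYU y u / (py θ y * pU u))
        = pθ θ * pu θ u * (pYU y u / pU u) := by
      intro y θ u
      have h1 := (hpy0 θ y).ne'
      have h2 := (hpU' u).ne'
      field_simp
    simp_rw [hterm]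
    have h3 : ∀ y, ∑ θ, ∑ u, pθ θ * pu θ u * (pYU y u / pU u)
        = ∑ u, pYU y u := by
      intro y
      rw [Finset.sum_comm]
      refine Finset.sum_congr rfl fun u _ => ?_
      rw [← Finset.sum_mul, ← hpU, mul_div_assoc', mul_comm,
        mul_div_assoc, div_self (hpU' u).ne', mul_one]
    simp_rw [h3]
    simp_rw [hpYU]
    rw [show (∑ y, ∑ u, ∑ θ, pθ θ * py θ y * pu θ u)
        = ∑ y, ∑ θ, ∑ u, pθ θ * py θ y * pu θ u from
      Finset.sum_congr rfl fun y _ => Finset.sum_comm]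
    exact S1
  calc (0:ℝ) = ∑ y, ∑ θ, ∑ u, pθ θ * py θ y * pu θ u * (1 - pYU y u / (py θ y * pU u)) := by
        simp_rw [mul_sub, mul_one, Finset.sum_sub_distrib]
        rw [S1, S2]; ring
    _ ≤ ∑ y, ∑ θ, ∑ u, pθ θ * py θ y * pu θ u * Real.log (py θ y * pU u / pYU y u) := by
        refine Finset.sum_le_sum fun y _ => Finset.sum_le_sum fun θ _ =>
          Finset.sum_le_sum fun u _ => ?_
        refine mul_le_mul_of_nonneg_left ?_ (mul_pos (mul_pos (hpθ0 θ) (hpy0 θ y)) (hpu0 θ u)).le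
        have hx : (0:ℝ) < py θ y * pU u / pYU y u := by
          have := hpy0 θ y; have := hpU' u; have := hpYU' y u; positivity
        have h := Real.log_le_sub_one_of_pos (inv_pos.mpr hx)
        rw [Real.log_inv, inv_div] at h
        linarith
end

section
/- In Bayesian linear regression with Gaussian prior N(0, λ^{-1} I_d) and likelihood N(θᵀx, σ²), for any auxiliary design matrix Z ∈ R^{m×d}, the gap between the variational aleatoric entropy estimate and the true aleatoric entropy equals (1/2) log(σ^{-2} (x*)ᵀ Λ(Z)^{-1} x* + 1) ≥ 0, where Λ(Z) = σ^{-2}(XᵀX + ZᵀZ) + λ I_d; moreover this gap tends to 0 as the minimum eigenvalue of XᵀX + ZᵀZ tends to infinity. -/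
open scoped BigOperators
open Matrix Real Filter

lemma aux_quad_inv_le {d : ℕ} (A : Matrix (Fin d) (Fin d) ℝ) (hA : A.PosDef) (c : ℝ) (hc : 0 < c)
    (hbound : ∀ v : Fin d → ℝ, c * (v ⬝ᵥ v) ≤ v ⬝ᵥ A.mulVec v) (x : Fin d → ℝ) :
    x ⬝ᵥ A⁻¹.mulVec x ≤ (x ⬝ᵥ x) / c := by
  set y := A⁻¹.mulVec x with hy
  have hAy : A.mulVec y = x := by
    rw [hy, Matrix.mulVec_mulVec, Matrix.mul_nonsing_inv _ hA.det_pos.ne'.isUnit,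
      Matrix.one_mulVec]
  set q := x ⬝ᵥ y with hqdef
  have hq : q = y ⬝ᵥ A.mulVec y := by rw [hqdef, dotProduct_comm, hAy]
  have hq0 : 0 ≤ q := by
    rcases eq_or_ne y 0 with h | h
    · simp [hq, h]
    · rw [hq]; have := hA.dotProduct_mulVec_pos h; simpa using this.le
  have hyy : c * (y ⬝ᵥ y) ≤ q := hq ▸ hbound y
  have hcs : q ^ 2 ≤ (x ⬝ᵥ x) * (y ⬝ᵥ y) := by
    simpa [hqdef, dotProduct, pow_two] using
      Finset.sum_mul_sq_le_sq_mul_sq Finset.univ x y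
  have hxx : 0 ≤ x ⬝ᵥ x := Finset.sum_nonneg fun i _ => mul_self_nonneg _
  rcases hq0.eq_or_lt with h | h
  · rw [← h]; positivity
  · rw [le_div_iff₀ hc]
    nlinarith [hcs, hyy]

/-- In Bayesian linear regression with prior `N(0, λ⁻¹ I_d)` and likelihood `N(θᵀx, σ²)`,
for any auxiliary design matrix `Z`, the gap between the variational aleatoric entropy
estimate `V_a(Z) = (1/2)(1 + log 2π) + (1/2) log(x*ᵀ Λ(Z)⁻¹ x* + σ²)` and the true
aleatoric entropy `U_a = (1/2)(1 + log 2πσ²)` equals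
`(1/2) log(σ⁻² x*ᵀ Λ(Z)⁻¹ x* + 1) ≥ 0`, where `Λ(Z) = σ⁻²(XᵀX + ZᵀZ) + λ I`;
moreover the gap tends to `0` along any sequence of auxiliary designs whose minimum
eigenvalue of `XᵀX + ZᵀZ` tends to infinity. -/
theorem bayesian_linear_regression_variational_gap
    {d n m : ℕ} (lam σ : ℝ) (hlam : 0 < lam) (hσ : 0 < σ)
    (X : Matrix (Fin n) (Fin d) ℝ) (xstar : Fin d → ℝ)
    (Λ : Matrix (Fin m) (Fin d) ℝ → Matrix (Fin d) (Fin d) ℝ)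
    (hΛ : ∀ Z, Λ Z = (σ ^ 2)⁻¹ • (Xᵀ * X + Zᵀ * Z) + lam • (1 : Matrix (Fin d) (Fin d) ℝ))
    (Ua : ℝ) (hUa : Ua = (1 / 2) * (1 + Real.log (2 * Real.pi * σ ^ 2)))
    (Va : Matrix (Fin m) (Fin d) ℝ → ℝ)
    (hVa : ∀ Z, Va Z = (1 / 2) * (1 + Real.log (2 * Real.pi)) +
      (1 / 2) * Real.log (xstar ⬝ᵥ (Λ Z)⁻¹.mulVec xstar + σ ^ 2)) :
    (∀ Z, Va Z - Ua = (1 / 2) * Real.log ((σ ^ 2)⁻¹ * (xstar ⬝ᵥ (Λ Z)⁻¹.mulVec xstar) + 1))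
    ∧ (∀ Z, 0 ≤ Va Z - Ua)
    ∧ (∀ (Zs : ℕ → Matrix (Fin m) (Fin d) ℝ) (γ : ℕ → ℝ),
        (∀ k (v : Fin d → ℝ), γ k * (v ⬝ᵥ v) ≤ v ⬝ᵥ (Xᵀ * X + (Zs k)ᵀ * Zs k).mulVec v) →
        Tendsto γ atTop atTop →
        Tendsto (fun k => Va (Zs k) - Ua) atTop (nhds 0)) := by
  have hσ2 : (0:ℝ) < σ ^ 2 := by positivity
  have hσ2inv : (0:ℝ) < (σ ^ 2)⁻¹ := by positivity
  -- positive semidefiniteness of the Gram matrices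
  have hGram : ∀ Z : Matrix (Fin m) (Fin d) ℝ, (Xᵀ * X + Zᵀ * Z).PosSemidef := by
    intro Z
    have h1 : (Xᵀ * X).PosSemidef := by
      simpa [Matrix.conjTranspose_eq_transpose_of_trivial] using
        Matrix.posSemidef_conjTranspose_mul_self X
    have h2 : (Zᵀ * Z).PosSemidef := by
      simpa [Matrix.conjTranspose_eq_transpose_of_trivial] using
        Matrix.posSemidef_conjTranspose_mul_self Z
    exact h1.add h2
  -- the quadratic form of Λ Z
  have hquad : ∀ Z (v : Fin d → ℝ), v ⬝ᵥ (Λ Z).mulVec v =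
      (σ ^ 2)⁻¹ * (v ⬝ᵥ (Xᵀ * X + Zᵀ * Z).mulVec v) + lam * (v ⬝ᵥ v) := by
    intro Z v
    rw [hΛ]
    simp only [Matrix.add_mulVec, Matrix.smul_mulVec, Matrix.one_mulVec, dotProduct_add,
      dotProduct_smul, smul_eq_mul]
  -- positive definiteness of Λ Z
  have hpos : ∀ Z, (Λ Z).PosDef := by
    intro Z
    refine Matrix.PosDef.of_dotProduct_mulVec_pos ?_ ?_
    · rw [hΛ]
      unfold Matrix.IsHermitian
      rw [Matrix.conjTranspose_add, Matrix.conjTranspose_smul, Matrix.conjTranspose_smul,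
        Matrix.conjTranspose_one, (hGram Z).1]
      simp
    · intro v hv
      have hg : 0 ≤ v ⬝ᵥ (Xᵀ * X + Zᵀ * Z).mulVec v := by
        have := (hGram Z).dotProduct_mulVec_nonneg v; simpa using this
      have hvv : 0 < v ⬝ᵥ v := by
        obtain ⟨i, hi⟩ := Function.ne_iff.mp hv
        exact Finset.sum_pos' (fun j _ => mul_self_nonneg _)
          ⟨i, Finset.mem_univ i, mul_self_pos.2 hi⟩
      have : 0 < v ⬝ᵥ (Λ Z).mulVec v := by
        rw [hquad]; positivity
      simpa using this
  -- nonnegativity of the inverse quadratic form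
  have hq0 : ∀ Z, 0 ≤ xstar ⬝ᵥ (Λ Z)⁻¹.mulVec xstar := by
    intro Z
    have := ((hpos Z).inv).posSemidef.dotProduct_mulVec_nonneg xstar
    simpa using this
  -- part 1 : the gap formula
  have part1 : ∀ Z, Va Z - Ua =
      (1 / 2) * Real.log ((σ ^ 2)⁻¹ * (xstar ⬝ᵥ (Λ Z)⁻¹.mulVec xstar) + 1) := by
    intro Z
    set q := xstar ⬝ᵥ (Λ Z)⁻¹.mulVec xstar with hqdef
    have hq : 0 ≤ q := hq0 Z
    have hqσ : 0 < q + σ ^ 2 := by positivity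
    have hlog2 : Real.log (2 * Real.pi * σ ^ 2) =
        Real.log (2 * Real.pi) + Real.log (σ ^ 2) := by
      rw [Real.log_mul (by positivity) (by positivity)]
    have harg : (σ ^ 2)⁻¹ * q + 1 = (q + σ ^ 2) / σ ^ 2 := by
      field_simp
    rw [hVa, hUa, hlog2, harg, Real.log_div hqσ.ne' hσ2.ne']
    ring
  refine ⟨part1, fun Z => ?_, ?_⟩
  · rw [part1]
    have h1 : (1:ℝ) ≤ (σ ^ 2)⁻¹ * (xstar ⬝ᵥ (Λ Z)⁻¹.mulVec xstar) + 1 := by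
      nlinarith [hq0 Z, hσ2inv]
    have := Real.log_nonneg h1
    positivity
  · intro Zs γ hγbound hγtop
    set c : ℕ → ℝ := fun k => max ((σ ^ 2)⁻¹ * γ k + lam) lam with hcdef
    have hcpos : ∀ k, 0 < c k := fun k => lt_of_lt_of_le hlam (le_max_right _ _)
    have hcbound : ∀ k (v : Fin d → ℝ), c k * (v ⬝ᵥ v) ≤ v ⬝ᵥ (Λ (Zs k)).mulVec v := by
      intro k v
      have hvv : 0 ≤ v ⬝ᵥ v := Finset.sum_nonneg fun i _ => mul_self_nonneg _
      have hg : 0 ≤ v ⬝ᵥ (Xᵀ * X + (Zs k)ᵀ * Zs k).mulVec v := by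
        have := (hGram (Zs k)).dotProduct_mulVec_nonneg v; simpa using this
      have hγv : (σ ^ 2)⁻¹ * (γ k * (v ⬝ᵥ v)) ≤
          (σ ^ 2)⁻¹ * (v ⬝ᵥ (Xᵀ * X + (Zs k)ᵀ * Zs k).mulVec v) :=
        mul_le_mul_of_nonneg_left (hγbound k v) hσ2inv.le
      rw [hquad]
      rcases le_total ((σ ^ 2)⁻¹ * γ k + lam) lam with h | h
      · rw [hcdef]; simp only [max_eq_right h]
        nlinarith
      · rw [hcdef]; simp only [max_eq_left h]
        nlinarith
    have hqle : ∀ k, xstar ⬝ᵥ (Λ (Zs k))⁻¹.mulVec xstar ≤ (xstar ⬝ᵥ xstar) / c k :=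
      fun k => aux_quad_inv_le _ (hpos (Zs k)) _ (hcpos k) (hcbound k) xstar
    have hctop : Tendsto c atTop atTop := by
      refine tendsto_atTop_mono (fun k => le_max_left _ _) ?_
      exact tendsto_atTop_add_const_right _ lam (hγtop.const_mul_atTop hσ2inv)
    have hdivtop : Tendsto (fun k => (xstar ⬝ᵥ xstar) / c k) atTop (nhds 0) :=
      Tendsto.div_atTop tendsto_const_nhds hctop
    have hqtend : Tendsto (fun k => xstar ⬝ᵥ (Λ (Zs k))⁻¹.mulVec xstar) atTop (nhds 0) :=
      squeeze_zero (fun k => hq0 (Zs k)) hqle hdivtop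
    have harg : Tendsto (fun k => (σ ^ 2)⁻¹ * (xstar ⬝ᵥ (Λ (Zs k))⁻¹.mulVec xstar) + 1)
        atTop (nhds 1) := by
      have := (hqtend.const_mul ((σ ^ 2)⁻¹)).add_const 1
      simpa using this
    have hlogtend : Tendsto (fun k =>
        Real.log ((σ ^ 2)⁻¹ * (xstar ⬝ᵥ (Λ (Zs k))⁻¹.mulVec xstar) + 1)) atTop (nhds 0) := by
      have := ((Real.continuousAt_log one_ne_zero).tendsto).comp harg
      simpa [Function.comp_def] using this
    have := hlogtend.const_mul (1/2 : ℝ)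
    simp only [mul_zero] at this
    refine Tendsto.congr (fun k => ?_) this
    rw [part1]
end

section
/- In the Gaussian process regression model with kernel k and noise variance σ², choosing the auxiliary input Z = x* gives variational aleatoric entropy V_a(y*|x*, x*, D) = U_a + (1/2) log(2 − σ²/(v(x*) + σ²)), where U_a = (1/2)(1 + log 2πσ²) and v(x*) = k(x*, x*) − K_{*X}(K_{XX} + σ² I)^{-1} K_{X*} is the noiseless posterior variance at x*; in particular the excess over U_a tends to 0 as v(x*) → 0. -/
open Filter Real

/-!
Conditioning on a fantasised observation at `x*` itself leaves the predictive variance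
`v + σ² − v²/(v + σ²) = σ² (2 − σ²/(v + σ²))`, so the entropy of that Gaussian splits off the
noise entropy `U_a` plus `½ log (2 − σ²/(v + σ²))`, a term that is continuous in `v` and
vanishes at `v = 0`.
-/

lemma add_sub_sq_div_add_eq_mul {v s : ℝ} (h : v + s ≠ 0) :
    v + s - v ^ 2 / (v + s) = s * (2 - s / (v + s)) := by
  field_simp
  ring

lemma one_le_two_sub_div_add {v s : ℝ} (hv : 0 ≤ v) (hs : 0 < s) :
    1 ≤ 2 - s / (v + s) := by
  have : s / (v + s) ≤ 1 := (div_le_one (by linarith)).2 (by linarith)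
  linarith

lemma half_one_add_log_add_half_log_mul {a s t : ℝ} (ha : a ≠ 0) (hs : s ≠ 0) (ht : t ≠ 0) :
    1 / 2 * (1 + log a) + 1 / 2 * log (s * t) = 1 / 2 * (1 + log (a * s)) + 1 / 2 * log t := by
  rw [log_mul hs ht, log_mul ha hs]
  ring

lemma tendsto_log_two_sub_div_add {s : ℝ} (hs : s ≠ 0) :
    Tendsto (fun w : ℝ => log (2 - s / (w + s))) (nhds 0) (nhds 0) := by
  have hcont : ContinuousAt (fun w : ℝ => log (2 - s / (w + s))) 0 := by
    refine (continuousAt_const.sub (continuousAt_const.div (continuousAt_id.add continuousAt_const)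
      (by simpa using hs))).log ?_
    norm_num [hs]
  simpa [hs, show (2 : ℝ) - 1 = 1 by norm_num] using hcont.tendsto

theorem gp_repeated_aux_variational_entropy_general
    (σ : ℝ) (hσ : 0 < σ)
    (v : ℝ)
    (hv0 : 0 ≤ v)
    (Δ : ℝ) (hΔ : Δ = v ^ 2 / (v + σ ^ 2))
    (Ua : ℝ) (hUa : Ua = (1 / 2) * (1 + Real.log (2 * Real.pi * σ ^ 2)))
    (Va : ℝ) (hVa : Va = (1 / 2) * (1 + Real.log (2 * Real.pi)) +
      (1 / 2) * Real.log (v + σ ^ 2 - Δ)) :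
    Va = Ua + (1 / 2) * Real.log (2 - σ ^ 2 / (v + σ ^ 2))
    ∧ Tendsto (fun w : ℝ => (1 / 2) * Real.log (2 - σ ^ 2 / (w + σ ^ 2)))
        (nhdsWithin 0 (Set.Ici 0)) (nhds 0) := by
  have hσ2 : 0 < σ ^ 2 := by positivity
  refine ⟨?_, ?_⟩
  · have hgain := one_le_two_sub_div_add hv0 hσ2
    rw [hVa, hUa, hΔ, add_sub_sq_div_add_eq_mul (by linarith),
      half_one_add_log_add_half_log_mul (by positivity) hσ2.ne' (by linarith)]
  · have hlim := (tendsto_log_two_sub_div_add hσ2.ne').const_mul (1 / 2)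
    rw [mul_zero] at hlim
    exact hlim.mono_left nhdsWithin_le_nhds

/-- GP regression with auxiliary input `Z = x*`: with noise variance `σ²` and noiseless
posterior variance `v(x*) = k(x*,x*) − K_{*X}(K_{XX} + σ²I)⁻¹K_{X*} ≥ 0`, conditioning
on one fantasised observation at `x*` reduces the predictive variance by
`Δ = v(x*)²/(v(x*) + σ²)`, and the variational aleatoric entropy satisfies
`V_a = U_a + (1/2) log(2 − σ²/(v(x*) + σ²))` where `U_a = (1/2)(1 + log 2πσ²)`;
the excess over `U_a` tends to `0` as `v(x*) → 0⁺`. -/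
theorem gp_repeated_aux_variational_entropy
    {n : ℕ} (σ : ℝ) (hσ : 0 < σ)
    (KXX : Matrix (Fin n) (Fin n) ℝ) (kstar : ℝ) (kvec : Fin n → ℝ)
    (v : ℝ)
    (hv : v = kstar - kvec ⬝ᵥ (KXX + σ ^ 2 • (1 : Matrix (Fin n) (Fin n) ℝ))⁻¹.mulVec kvec)
    (hv0 : 0 ≤ v)
    (Δ : ℝ) (hΔ : Δ = v ^ 2 / (v + σ ^ 2))
    (Ua : ℝ) (hUa : Ua = (1 / 2) * (1 + Real.log (2 * Real.pi * σ ^ 2)))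
    (Va : ℝ) (hVa : Va = (1 / 2) * (1 + Real.log (2 * Real.pi)) +
      (1 / 2) * Real.log (v + σ ^ 2 - Δ)) :
    Va = Ua + (1 / 2) * Real.log (2 - σ ^ 2 / (v + σ ^ 2))
    ∧ Tendsto (fun w : ℝ => (1 / 2) * Real.log (2 - σ ^ 2 / (w + σ ^ 2)))
        (nhdsWithin 0 (Set.Ici 0)) (nhds 0) :=
  gp_repeated_aux_variational_entropy_general σ hσ v hv0 Δ hΔ Ua hUa Va hVa
end
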